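/- arXiv:1204.6514 — 2 statements merged into one kernel-verified Lean document; each statement's English description precedes it below -/
import Mathlib

section
/- Two bit strings of length n whose Gray-to-binary conversions, read as natural numbers in base 2, differ by exactly 1 (i.e. are consecutive in rank) differ in exactly one bit position. -/
/-!
Write `R = rank n g`. Bit `n - 1 - i` of `R` is the `i`-th Gray-to-binary bit `u i`, and bit `n`
of `R` is `0`; since `g i = u i ⊕ u (i - 1)`, every `g i` is the xor of two adjacent bits of `R`.
Going from `m` to `m + 1` flips bit `j` exactly when `2 ^ j ∣ m + 1`. So `g` and `g'` differ
at `i` exactly when `2 ^ (n - 1 - i)` divides `rank n g'` but `2 ^ (n - i)` does not, that is,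
at the single position with `n - 1 - i = v₂ (rank n g')`.
-/

/-- Gray-to-binary conversion on bit strings of length `n`:
`u i` is the XOR (parity) of `g 0, …, g i`. -/
def grayToBin (n : ℕ) (g : Fin n → Bool) : Fin n → Bool :=
  fun i => decide (Odd ((Finset.Iic i).filter (fun j => g j = true)).card)

/-- The rank of a bit string `g` of length `n`: the natural number whose base-2
digits (most significant first) are the bits of the Gray-to-binary conversion of `g`. -/
def rank (n : ℕ) (g : Fin n → Bool) : ℕ :=
  ∑ i : Fin n, if grayToBin n g i then 2 ^ (n - 1 - (i : ℕ)) else 0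

theorem Nat.testBit_sum_two_pow (s : Finset ℕ) (j : ℕ) :
    (∑ i ∈ s, 2 ^ i).testBit j = decide (j ∈ s) := by
  rw [Bool.eq_iff_iff, decide_eq_true_iff, ← Nat.mem_bitIndices, ← List.mem_toFinset,
    Finset.toFinset_bitIndices_sum_two_pow]

theorem Nat.testBit_xor_testBit_add_one (m j : ℕ) :
    (m.testBit j ^^ (m + 1).testBit j) = decide (2 ^ j ∣ m + 1) := by
  simp only [Nat.testBit_eq_decide_div_mod_eq, Nat.succ_div]
  split_ifs with h <;> simp [h]; omega

section Gray

variable {n : ℕ}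

theorem grayToBin_zero (g : Fin (n + 1) → Bool) : grayToBin (n + 1) g 0 = g 0 := by
  have : Finset.Iic (0 : Fin (n + 1)) = {0} := by ext; simp
  cases h : g 0 <;> simp [grayToBin, this, Finset.filter_singleton, h]

theorem grayToBin_succ (g : Fin (n + 1) → Bool) (i : Fin n) :
    grayToBin (n + 1) g i.succ = (g i.succ ^^ grayToBin (n + 1) g i.castSucc) := by
  have hIic : Finset.Iic i.succ = insert i.succ (Finset.Iic i.castSucc) := by
    ext j
    simp only [Finset.mem_Iic, Finset.mem_insert, Fin.le_def, Fin.ext_iff, Fin.val_succ,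
      Fin.val_castSucc]
    omega
  have hnotMem : i.succ ∉ Finset.Iic i.castSucc := by simp [Fin.le_def]
  rw [grayToBin, grayToBin, hIic, Finset.filter_insert]
  cases g i.succ
  · simp
  · simp [Finset.card_insert_of_notMem fun h => hnotMem (Finset.mem_of_mem_filter _ h),
      Nat.odd_add_one, ← decide_not]

theorem rank_eq_sum_two_pow (g : Fin n → Bool) :
    rank n g = ∑ j ∈ (Finset.univ.filter (grayToBin n g ·)).image (fun i : Fin n => n - 1 - i),
      2 ^ j := by
  rw [Finset.sum_image (fun i _ k _ h => by omega), Finset.sum_filter, rank]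

theorem testBit_rank (g : Fin n → Bool) (i : Fin n) :
    (rank n g).testBit (n - 1 - i) = grayToBin n g i := by
  have hinj (k : Fin n) : n - 1 - k = n - 1 - i ↔ k = i := by rw [Fin.ext_iff]; omega
  rw [rank_eq_sum_two_pow, Nat.testBit_sum_two_pow]
  simp [hinj]

theorem rank_lt_two_pow (g : Fin n → Bool) : rank n g < 2 ^ n := by
  refine Nat.lt_pow_two_of_testBit _ fun j hj => ?_
  rw [rank_eq_sum_two_pow, Nat.testBit_sum_two_pow]
  simp only [Finset.mem_image, Finset.mem_filter, Finset.mem_univ, true_and,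
    decide_eq_false_iff_not, not_exists, not_and]
  omega

theorem apply_eq_xor_testBit_rank (g : Fin n → Bool) (i : Fin n) :
    g i = ((rank n g).testBit (n - 1 - i) ^^ (rank n g).testBit (n - i)) := by
  cases n with
  | zero => exact i.elim0
  | succ n =>
    induction i using Fin.cases with
    | zero =>
      rw [← grayToBin_zero g, ← testBit_rank, Fin.val_zero, Nat.sub_zero, Nat.sub_zero,
        Nat.testBit_lt_two_pow (rank_lt_two_pow g), Bool.xor_false]
    | succ i =>
      have hprev : n + 1 - (i.succ : ℕ) = n + 1 - 1 - (i.castSucc : ℕ) := by simp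
      rw [hprev, testBit_rank, testBit_rank, grayToBin_succ, Bool.xor_assoc, Bool.xor_self,
        Bool.xor_false]

theorem apply_ne_apply_iff_of_rank_eq_add_one {g g' : Fin n → Bool}
    (h : rank n g' = rank n g + 1) (i : Fin n) :
    g i ≠ g' i ↔ n - 1 - i = (rank n g').factorization 2 := by
  have hN : rank n g' ≠ 0 := by omega
  have hi : n - (i : ℕ) = n - 1 - i + 1 := by omega
  rw [← Bool.xor_iff_ne, apply_eq_xor_testBit_rank g, apply_eq_xor_testBit_rank g', hi, h]
  rw [show ∀ a b c d : Bool, ((a ^^ b) ^^ (c ^^ d)) = ((a ^^ c) ^^ (b ^^ d)) by decide,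
    Nat.testBit_xor_testBit_add_one, Nat.testBit_xor_testBit_add_one, ← h]
  simp only [Nat.prime_two.pow_dvd_iff_le_factorization hN, Bool.xor_iff_ne, ne_eq,
    decide_eq_decide]
  omega

end Gray

/-- Two bit strings of length `n` whose ranks are consecutive differ in exactly
one bit position. -/
theorem consecutive_rank_differ_in_one_bit (n : ℕ) (g g' : Fin n → Bool)
    (h : rank n g' = rank n g + 1) :
    (Finset.univ.filter (fun i : Fin n => g i ≠ g' i)).card = 1 := by
  set v := (rank n g').factorization 2
  have hv : v < n := by
    have hpow : 2 ^ v ≤ rank n g' := Nat.le_of_dvd (by omega) (Nat.ordProj_dvd _ 2)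
    exact (Nat.pow_lt_pow_iff_right (by norm_num)).1 (hpow.trans_lt (rank_lt_two_pow g'))
  rw [Finset.card_eq_one]
  refine ⟨⟨n - 1 - v, by omega⟩, Finset.ext fun i => ?_⟩
  rw [Finset.mem_filter, Finset.mem_singleton, apply_ne_apply_iff_of_rank_eq_add_one h, Fin.ext_iff]
  simp only [Finset.mem_univ, true_and]
  omega
end

section
/- (Monotonicity of GON in the initial condition) Let f be a continuous unimodal map on [a,b] with turning point x_c, strictly increasing on [a,x_c] and strictly decreasing on [x_c,b]. For x ≤ y in [a,b], GON(P_f(x)) ≤ GON(P_f(y)), where P_f(z) is the itinerary of z and GON is defined via the parity (Gray-to-binary) construction. -/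
open Classical in
/-- The Gray bit at step `i` of the itinerary of `z`: `0` for `L` (below `xc`),
`1` for `R` or `C`. -/
noncomputable def grayBit (f : ℝ → ℝ) (xc z : ℝ) (i : ℕ) : Bool :=
  decide (¬ f^[i] z < xc)

/-- The Gray-to-binary bit at step `i`: parity of the Gray bits up to index `i`. -/
noncomputable def ubit (f : ℝ → ℝ) (xc z : ℝ) (i : ℕ) : Bool :=
  decide (Odd ((Finset.range (i + 1)).filter (fun j => grayBit f xc z j = true)).card)

open Classical in
/-- The Gray Ordering Number of the itinerary of `z` under `f` relative to `xc`.
If the orbit hits `xc` (symbol `C`) the itinerary is truncated at the first such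
index `j`, with final bit `u j = 1`; otherwise it is the infinite sum of the
parity bits. -/
noncomputable def GON (f : ℝ → ℝ) (xc z : ℝ) : ℝ :=
  if h : ∃ j : ℕ, f^[j] z = xc then
    (∑ i ∈ Finset.range (Nat.find h),
        if ubit f xc z i then ((2 : ℝ) ^ (i + 1))⁻¹ else 0) +
      ((2 : ℝ) ^ (Nat.find h + 1))⁻¹
  else
    ∑' i : ℕ, if ubit f xc z i then ((2 : ℝ) ^ (i + 1))⁻¹ else 0

namespace GONAux

variable (f : ℝ → ℝ) (xc : ℝ)

/-- Weight. -/
noncomputable def W (i : ℕ) : ℝ := ((2 : ℝ) ^ (i + 1))⁻¹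

/-- Term. -/
noncomputable def T (z : ℝ) (i : ℕ) : ℝ := if ubit f xc z i then W i else 0

lemma W_pos (i : ℕ) : 0 < W i := by
  unfold W; positivity

lemma W_succ (i : ℕ) : W (i + 1) = W i / 2 := by
  unfold W; rw [pow_succ]; ring

lemma T_nonneg (z : ℝ) (i : ℕ) : 0 ≤ T f xc z i := by
  unfold T; split <;> simp [le_of_lt (W_pos i)]

lemma T_le_W (z : ℝ) (i : ℕ) : T f xc z i ≤ W i := by
  unfold T; split <;> simp [le_of_lt (W_pos i)]

lemma summable_W : Summable W := by
  have : Summable (fun i : ℕ => (2 : ℝ)⁻¹ ^ i * 2⁻¹) :=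
    (summable_geometric_of_lt_one (by norm_num) (by norm_num)).mul_right _
  refine this.congr fun i => ?_
  unfold W
  rw [pow_succ, mul_inv, inv_pow]

lemma tsum_W : ∑' i : ℕ, W i = 1 := by
  have h : ∑' i : ℕ, ((2 : ℝ)⁻¹ ^ i * 2⁻¹) = 1 := by
    rw [tsum_mul_right, tsum_geometric_of_lt_one (by norm_num) (by norm_num)]
    norm_num
  rw [← h]
  refine tsum_congr fun i => ?_
  unfold W
  rw [pow_succ, mul_inv, inv_pow]

lemma sum_W (N : ℕ) : ∑ i ∈ Finset.range N, W i = 1 - ((2 : ℝ) ^ N)⁻¹ := by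
  induction N with
  | zero => simp
  | succ n ih =>
    rw [Finset.sum_range_succ, ih]
    unfold W
    rw [pow_succ]
    have : (2 : ℝ) ^ n ≠ 0 := by positivity
    field_simp
    ring

lemma summable_T (z : ℝ) : Summable (T f xc z) :=
  Summable.of_nonneg_of_le (T_nonneg f xc z) (T_le_W f xc z) (summable_W)

lemma grayBit_succ (z : ℝ) (j : ℕ) :
    grayBit f xc z (j + 1) = grayBit f xc (f z) j := by
  simp [grayBit, Function.iterate_succ_apply]

lemma count_succ (z : ℝ) (n : ℕ) :
    ((Finset.range (n + 1)).filter (fun j => grayBit f xc z j = true)).card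
      = ((Finset.range n).filter (fun j => grayBit f xc (f z) j = true)).card
        + (if grayBit f xc z 0 then 1 else 0) := by
  classical
  rw [Finset.card_filter, Finset.card_filter, Finset.sum_range_succ']
  simp only [grayBit_succ]

lemma ubit_zero (z : ℝ) : ubit f xc z 0 = grayBit f xc z 0 := by
  classical
  cases h : grayBit f xc z 0 <;>
    simp [ubit, Finset.range_one, Finset.filter_singleton, h, Nat.odd_iff]

lemma ubit_succ_of_lt {z : ℝ} (hz : z < xc) (i : ℕ) :
    ubit f xc z (i + 1) = ubit f xc (f z) i := by
  have h0 : grayBit f xc z 0 = false := by simp [grayBit, hz]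
  simp [ubit, count_succ, h0]

lemma ubit_succ_of_ge {z : ℝ} (hz : ¬ z < xc) (i : ℕ) :
    ubit f xc z (i + 1) = !(ubit f xc (f z) i) := by
  have h0 : grayBit f xc z 0 = true := by simp [grayBit, hz]
  simp only [ubit, count_succ, h0, if_true, Nat.odd_add_one]
  rw [decide_not]

lemma exists_hit_shift {z : ℝ} (hz : z ≠ xc) :
    (∃ j : ℕ, f^[j] z = xc) ↔ (∃ j : ℕ, f^[j] (f z) = xc) := by
  constructor
  · rintro ⟨j, hj⟩
    cases j with
    | zero => exact absurd hj hz
    | succ k => exact ⟨k, by rwa [Function.iterate_succ_apply] at hj⟩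
  · rintro ⟨k, hk⟩
    exact ⟨k + 1, by rwa [Function.iterate_succ_apply]⟩

lemma find_hit_shift {z : ℝ} (hz : z ≠ xc) (h : ∃ j : ℕ, f^[j] z = xc)
    (h' : ∃ j : ℕ, f^[j] (f z) = xc) :
    Nat.find h = Nat.find h' + 1 := by
  have hne : Nat.find h ≠ 0 := by
    intro h0
    have := Nat.find_spec h
    rw [h0] at this
    exact hz this
  obtain ⟨m, hm⟩ := Nat.exists_eq_succ_of_ne_zero hne
  have hspec := Nat.find_spec h
  rw [hm, Function.iterate_succ_apply] at hspec
  have h1 : Nat.find h' ≤ m := Nat.find_le hspec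
  have h2 : m ≤ Nat.find h' := by
    by_contra hc
    push_neg at hc
    have hh : f^[Nat.find h' + 1] z = xc := by
      rw [Function.iterate_succ_apply]; exact Nat.find_spec h'
    have h3 : Nat.find h ≤ Nat.find h' + 1 := Nat.find_le hh
    omega
  omega

lemma GON_eq_tsum {z : ℝ} (h : ¬ ∃ j : ℕ, f^[j] z = xc) :
    GON f xc z = ∑' i : ℕ, T f xc z i := by
  unfold GON
  rw [dif_neg h]
  rfl

lemma GON_eq_sum {z : ℝ} (h : ∃ j : ℕ, f^[j] z = xc) :
    GON f xc z = (∑ i ∈ Finset.range (Nat.find h), T f xc z i) + W (Nat.find h) := by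
  unfold GON
  rw [dif_pos h]
  rfl

lemma GON_nonneg (z : ℝ) : 0 ≤ GON f xc z := by
  by_cases h : ∃ j : ℕ, f^[j] z = xc
  · rw [GON_eq_sum f xc h]
    have := Finset.sum_nonneg fun i (_ : i ∈ Finset.range (Nat.find h)) => T_nonneg f xc z i
    have := W_pos (Nat.find h)
    linarith
  · rw [GON_eq_tsum f xc h]
    exact tsum_nonneg (T_nonneg f xc z)

lemma GON_le_one (z : ℝ) : GON f xc z ≤ 1 := by
  by_cases h : ∃ j : ℕ, f^[j] z = xc
  · rw [GON_eq_sum f xc h]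
    have h1 : (∑ i ∈ Finset.range (Nat.find h), T f xc z i)
        ≤ ∑ i ∈ Finset.range (Nat.find h), W i :=
      Finset.sum_le_sum fun i _ => T_le_W f xc z i
    rw [sum_W] at h1
    have h2 : W (Nat.find h) ≤ ((2 : ℝ) ^ Nat.find h)⁻¹ := by
      unfold W
      rw [pow_succ]
      have : (0 : ℝ) < (2 : ℝ) ^ Nat.find h := by positivity
      rw [mul_inv]
      nlinarith [inv_pos.mpr this]
    linarith
  · rw [GON_eq_tsum f xc h]
    calc ∑' i : ℕ, T f xc z i ≤ ∑' i : ℕ, W i :=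
          Summable.tsum_le_tsum (T_le_W f xc z) (summable_T f xc z) summable_W
      _ = 1 := tsum_W

lemma GON_of_eq : GON f xc xc = 1 / 2 := by
  have h : ∃ j : ℕ, f^[j] xc = xc := ⟨0, rfl⟩
  rw [GON_eq_sum f xc h]
  have h0 : Nat.find h = 0 := by
    simp [Nat.find_eq_zero h]
  rw [h0]
  simp [W]

lemma T_zero_of_lt {z : ℝ} (hz : z < xc) : T f xc z 0 = 0 := by
  unfold T
  rw [ubit_zero]
  simp [grayBit, hz]

lemma T_zero_of_gt {z : ℝ} (hz : xc < z) : T f xc z 0 = 1 / 2 := by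
  unfold T
  rw [ubit_zero]
  have : ¬ z < xc := not_lt.mpr (le_of_lt hz)
  simp [grayBit, this, W]

lemma T_succ_of_lt {z : ℝ} (hz : z < xc) (i : ℕ) :
    T f xc z (i + 1) = T f xc (f z) i / 2 := by
  unfold T
  rw [ubit_succ_of_lt f xc hz, W_succ]
  split <;> simp

lemma T_succ_of_gt {z : ℝ} (hz : xc < z) (i : ℕ) :
    T f xc z (i + 1) = W (i + 1) - T f xc (f z) i / 2 := by
  unfold T
  rw [ubit_succ_of_ge f xc (not_lt.mpr (le_of_lt hz)), W_succ]
  cases h : ubit f xc (f z) i <;> simp [h]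

lemma GON_of_lt {z : ℝ} (hz : z < xc) : GON f xc z = GON f xc (f z) / 2 := by
  have hne : z ≠ xc := ne_of_lt hz
  by_cases h' : ∃ j : ℕ, f^[j] (f z) = xc
  · have h : ∃ j : ℕ, f^[j] z = xc := (exists_hit_shift f xc hne).mpr h'
    rw [GON_eq_sum f xc h, GON_eq_sum f xc h', find_hit_shift f xc hne h h']
    rw [Finset.sum_range_succ', T_zero_of_lt f xc hz]
    have : ∀ i ∈ Finset.range (Nat.find h'), T f xc z (i + 1) = T f xc (f z) i / 2 :=
      fun i _ => T_succ_of_lt f xc hz i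
    rw [Finset.sum_congr rfl this, W_succ]
    rw [← Finset.sum_div]
    ring
  · have h : ¬ ∃ j : ℕ, f^[j] z = xc := fun hh => h' ((exists_hit_shift f xc hne).mp hh)
    rw [GON_eq_tsum f xc h, GON_eq_tsum f xc h']
    rw [Summable.tsum_eq_zero_add (summable_T f xc z), T_zero_of_lt f xc hz]
    have heq : ∀ i : ℕ, T f xc z (i + 1) = T f xc (f z) i / 2 := T_succ_of_lt f xc hz
    calc (0 : ℝ) + ∑' i : ℕ, T f xc z (i + 1)
        = ∑' i : ℕ, T f xc (f z) i / 2 := by rw [zero_add]; exact tsum_congr heq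
      _ = (∑' i : ℕ, T f xc (f z) i) / 2 := by
          rw [tsum_div_const]

lemma GON_of_gt {z : ℝ} (hz : xc < z) : GON f xc z = 1 - GON f xc (f z) / 2 := by
  have hne : z ≠ xc := ne_of_gt hz
  by_cases h' : ∃ j : ℕ, f^[j] (f z) = xc
  · have h : ∃ j : ℕ, f^[j] z = xc := (exists_hit_shift f xc hne).mpr h'
    rw [GON_eq_sum f xc h, GON_eq_sum f xc h', find_hit_shift f xc hne h h']
    rw [Finset.sum_range_succ', T_zero_of_gt f xc hz]
    have hcongr : ∀ i ∈ Finset.range (Nat.find h'),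
        T f xc z (i + 1) = W (i + 1) - T f xc (f z) i / 2 :=
      fun i _ => T_succ_of_gt f xc hz i
    rw [Finset.sum_congr rfl hcongr, Finset.sum_sub_distrib]
    have hW : ∑ i ∈ Finset.range (Nat.find h'), W (i + 1)
        = (1 - ((2 : ℝ) ^ Nat.find h')⁻¹) / 2 := by
      have : ∀ i ∈ Finset.range (Nat.find h'), W (i + 1) = W i / 2 := fun i _ => W_succ i
      rw [Finset.sum_congr rfl this, ← Finset.sum_div, sum_W]
    rw [hW, ← Finset.sum_div, W_succ]
    have hWN : W (Nat.find h') = ((2 : ℝ) ^ Nat.find h')⁻¹ / 2 := by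
      unfold W; rw [pow_succ, mul_inv]; ring
    rw [hWN]
    ring
  · have h : ¬ ∃ j : ℕ, f^[j] z = xc := fun hh => h' ((exists_hit_shift f xc hne).mp hh)
    rw [GON_eq_tsum f xc h, GON_eq_tsum f xc h']
    rw [Summable.tsum_eq_zero_add (summable_T f xc z), T_zero_of_gt f xc hz]
    have heq : ∀ i : ℕ, T f xc z (i + 1) = W (i + 1) - T f xc (f z) i / 2 :=
      T_succ_of_gt f xc hz
    have hsumW : Summable (fun i : ℕ => W (i + 1)) := summable_W.comp_injective Nat.succ_injective
    have hsumT : Summable (fun i : ℕ => T f xc (f z) i / 2) :=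
      (summable_T f xc (f z)).div_const 2
    have htW : ∑' i : ℕ, W (i + 1) = 1 / 2 := by
      have := Summable.tsum_eq_zero_add summable_W
      rw [tsum_W] at this
      have hW0 : W 0 = 1 / 2 := by unfold W; norm_num
      rw [hW0] at this
      linarith
    calc (1 : ℝ) / 2 + ∑' i : ℕ, T f xc z (i + 1)
        = 1 / 2 + ∑' i : ℕ, (W (i + 1) - T f xc (f z) i / 2) := by
          rw [tsum_congr heq]
      _ = 1 / 2 + ((∑' i : ℕ, W (i + 1)) - ∑' i : ℕ, T f xc (f z) i / 2) := by
          rw [Summable.tsum_sub hsumW hsumT]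
      _ = 1 - (∑' i : ℕ, T f xc (f z) i) / 2 := by
          rw [htW, tsum_div_const]; ring

lemma GON_le_half {z : ℝ} (hz : z ≤ xc) : GON f xc z ≤ 1 / 2 := by
  rcases lt_or_eq_of_le hz with h | h
  · rw [GON_of_lt f xc h]
    have := GON_le_one f xc (f z)
    linarith
  · rw [h, GON_of_eq]

lemma GON_ge_half {z : ℝ} (hz : xc ≤ z) : 1 / 2 ≤ GON f xc z := by
  rcases lt_or_eq_of_le hz with h | h
  · rw [GON_of_gt f xc h]
    have := GON_le_one f xc (f z)
    linarith
  · rw [← h, GON_of_eq]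

end GONAux

/-- Monotonicity of the Gray Ordering Number with respect to the initial
condition, for a continuous unimodal map on `[a,b]`. -/
theorem GON_monotone (f : ℝ → ℝ) (a b xc : ℝ)
    (hxc : xc ∈ Set.Ioo a b)
    (hcont : ContinuousOn f (Set.Icc a b))
    (hmono : StrictMonoOn f (Set.Icc a xc))
    (hanti : StrictAntiOn f (Set.Icc xc b))
    (hmaps : Set.MapsTo f (Set.Icc a b) (Set.Icc a b))
    (x y : ℝ) (hx : x ∈ Set.Icc a b) (hy : y ∈ Set.Icc a b) (hxy : x ≤ y) :
    GON f xc x ≤ GON f xc y := by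
  have key : ∀ n : ℕ, ∀ x y : ℝ, x ∈ Set.Icc a b → y ∈ Set.Icc a b → x ≤ y →
      GON f xc x - GON f xc y ≤ (1 / 2 : ℝ) ^ n := by
    intro n
    induction n with
    | zero =>
      intro x y hx hy hxy
      have := GONAux.GON_le_one f xc x
      have := GONAux.GON_nonneg f xc y
      simp only [pow_zero]
      linarith
    | succ n ih =>
      intro x y hx hy hxy
      have hpow : (0 : ℝ) < (1 / 2 : ℝ) ^ (n + 1) := by positivity
      rcases lt_trichotomy x xc with h1 | h1 | h1
      · rcases lt_or_ge y xc with h2 | h2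
        · have hfx : f x ∈ Set.Icc a b := hmaps hx
          have hfy : f y ∈ Set.Icc a b := hmaps hy
          have hxm : x ∈ Set.Icc a xc := ⟨hx.1, le_of_lt h1⟩
          have hym : y ∈ Set.Icc a xc := ⟨hy.1, le_of_lt h2⟩
          have hff : f x ≤ f y := hmono.monotoneOn hxm hym hxy
          have hih := ih (f x) (f y) hfx hfy hff
          rw [GONAux.GON_of_lt f xc h1, GONAux.GON_of_lt f xc h2, pow_succ]
          linarith
        · have hA := GONAux.GON_le_half f xc (le_of_lt h1)
          have hB := GONAux.GON_ge_half f xc h2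
          linarith
      · have hA : GON f xc x = 1 / 2 := by rw [h1, GONAux.GON_of_eq]
        have hB := GONAux.GON_ge_half f xc (h1 ▸ hxy)
        linarith
      · have h2 : xc < y := lt_of_lt_of_le h1 hxy
        have hfx : f x ∈ Set.Icc a b := hmaps hx
        have hfy : f y ∈ Set.Icc a b := hmaps hy
        have hxm : x ∈ Set.Icc xc b := ⟨le_of_lt h1, hx.2⟩
        have hym : y ∈ Set.Icc xc b := ⟨le_of_lt h2, hy.2⟩
        have hff : f y ≤ f x := hanti.antitoneOn hxm hym hxy
        have hih := ih (f y) (f x) hfy hfx hff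
        rw [GONAux.GON_of_gt f xc h1, GONAux.GON_of_gt f xc h2, pow_succ]
        linarith
  by_contra hlt
  push_neg at hlt
  obtain ⟨n, hn⟩ := exists_pow_lt_of_lt_one (sub_pos.mpr hlt) (by norm_num : (1 / 2 : ℝ) < 1)
  exact absurd (key n x y hx hy hxy) (by linarith)
end
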